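/- arXiv:1811.02595 — 8 statements merged into one kernel-verified Lean document; each statement's English description precedes it below -/
import Mathlib

section
/- Let q be a prime power and A = F_q[T]. The set of finite-index subgroups of SL₂(A) with nonzero level is countable. -/
open Matrix Polynomial

/-- The unipotent matrix `[[1,a],[0,1]]` as an element of `GL₂(R)`. -/
def unipGL {R : Type*} [CommRing R] (a : R) : GL (Fin 2) R :=
  ⟨!![1, a; 0, 1], !![1, -a; 0, 1],
    by simp [Matrix.mul_fin_two, Matrix.one_fin_two],
    by simp [Matrix.mul_fin_two, Matrix.one_fin_two]⟩

/-- The quasi-level of a subgroup `Γ ≤ SL₂(R)`: the set of `a ∈ R` such that the unipotent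
matrix `[[1,a],[0,1]]` lies in `g Γ g⁻¹` for every `g ∈ GL₂(R)`. -/
def quasiLevelSL {R : Type*} [CommRing R]
    (Γ : Subgroup (Matrix.SpecialLinearGroup (Fin 2) R)) : Set R :=
  {a : R | ∀ g : GL (Fin 2) R,
    g⁻¹ * unipGL a * g ∈ Γ.map Matrix.SpecialLinearGroup.toGL}

/-
Let `N(I)` be the normal closure in `SL₂(A)` of the unipotents `[[1, x], [0, 1]]` with `x ∈ I`.
A subgroup of nonzero level contains `N(I)` for some ideal `I ≠ 0`, and `SL₂(A) ⧸ N(I)` is finitely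
generated: by the Euclidean algorithm `SL₂(A)` is generated by elementary matrices, and modulo
`N(I)` an elementary matrix depends only on its entry modulo `I`, which takes finitely many values.
So a finite-index subgroup of nonzero level is the preimage of a finite-index, hence (Schreier)
finitely generated, subgroup of a countable group, and there are countably many of those for each
of the countably many ideals `I`.
-/

open scoped MatrixGroups

local notation "τ₀₁" => SpecialLinearGroup.transvection (zero_ne_one : (0 : Fin 2) ≠ 1)
local notation "τ₁₀" => SpecialLinearGroup.transvection (one_ne_zero : (1 : Fin 2) ≠ 0)

namespace Subgroup

variable {G : Type*} [Group G] [Countable G]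

theorem countable_setOf_fg : {H : Subgroup G | H.FG}.Countable := by
  refine (Set.countable_range fun s : Finset G => closure (s : Set G)).mono ?_
  rintro H ⟨s, rfl⟩
  exact ⟨s, rfl⟩

theorem countable_setOf_finiteIndex [Group.FG G] : {H : Subgroup G | H.FiniteIndex}.Countable :=
  countable_setOf_fg.mono fun H (_ : H.FiniteIndex) => (Group.fg_iff_subgroup_fg H).1 inferInstance

theorem countable_setOf_finiteIndex_and_le (N : Subgroup G) [N.Normal] [Group.FG (G ⧸ N)] :
    {H : Subgroup G | H.FiniteIndex ∧ N ≤ H}.Countable := by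
  have : Countable (G ⧸ N) := QuotientGroup.mk_surjective.countable
  let π := QuotientGroup.mk' N
  refine (countable_setOf_finiteIndex.image (comap π)).mono ?_
  rintro H ⟨hH, hNH⟩
  have hcomap : comap π (map π H) = H := comap_map_eq_self (by rwa [QuotientGroup.ker_mk'])
  refine ⟨map π H, ⟨?_⟩, hcomap⟩
  rw [← index_comap_of_surjective _ (QuotientGroup.mk'_surjective N), hcomap]
  exact hH.index_ne_zero

end Subgroup

theorem Polynomial.finite_quotient_of_ne_bot {K : Type*} [Field K] [Finite K] {I : Ideal K[X]}
    (hI : I ≠ ⊥) : Finite (K[X] ⧸ I) := by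
  obtain ⟨f, rfl⟩ := (IsPrincipalIdealRing.principal I).principal
  have hf : f ≠ 0 := by rintro rfl; exact hI (by simp)
  have : Module.Finite K (AdjoinRoot f) := (AdjoinRoot.powerBasis hf).finite
  exact Module.finite_of_finite K (M := AdjoinRoot f)

namespace Matrix.SL2

section CommRing

variable {R : Type*} [CommRing R]

/- `τ₀₁ (-1) * τ₁₀ 1 * τ₀₁ (-1)` is the rotation `[[0, -1], [1, 0]]`; multiplying by it on the
left moves row `0` to row `1`. -/
theorem swap_mul_transvection_mul_apply_one_zero (x : R) (M : SL(2, R)) :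
    ((τ₀₁ (-1) * τ₁₀ 1 * τ₀₁ (-1) * τ₀₁ x * M : SL(2, R))) 1 0 = M 0 0 + x * M 1 0 := by
  simp [SpecialLinearGroup.transvection_coe, Matrix.mul_apply, Fin.sum_univ_two,
    Matrix.single_apply]

/- For `M = [[a, b], [0, d]]` with `a * d = 1`: `τ₀₁ a * τ₁₀ (-d) * τ₀₁ a = [[0, a], [-d, 0]]`,
whose product with the rotation is `diag(a, d)`, and `M = τ₀₁ (b * a) * diag(a, d)`; the two
leading factors are merged into one. -/
theorem eq_transvection_prod_of_apply_one_zero_eq_zero (M : SL(2, R)) (hM : M 1 0 = 0) :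
    M = τ₀₁ (M 0 1 * M 0 0 + M 0 0) * τ₁₀ (-M 1 1) * τ₀₁ (M 0 0) *
      (τ₀₁ (-1) * τ₁₀ 1 * τ₀₁ (-1)) := by
  have hdet : M 0 0 * M 1 1 = 1 := by
    have := M.2
    rwa [Matrix.det_fin_two, hM, mul_zero, sub_zero] at this
  ext i j
  fin_cases i <;> fin_cases j <;>
    simp [SpecialLinearGroup.transvection_coe, Matrix.mul_apply, Fin.sum_univ_two,
      Matrix.single_apply] <;> grind

theorem transvection_one_zero_mul_swap (x : R) :
    τ₁₀ x * (τ₀₁ (-1) * τ₁₀ 1 * τ₀₁ (-1)) = τ₀₁ (-1) * τ₁₀ 1 * τ₀₁ (-1) * τ₀₁ (-x) := by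
  ext i j
  fin_cases i <;> fin_cases j <;>
    simp [SpecialLinearGroup.transvection_coe, Matrix.mul_apply, Fin.sum_univ_two,
      Matrix.single_apply]

def normalClosureTransvections (I : Ideal R) : Subgroup SL(2, R) :=
  Subgroup.normalClosure (τ₀₁ '' I)

instance (I : Ideal R) : (normalClosureTransvections I).Normal :=
  Subgroup.normalClosure_normal

theorem transvection_mem_normalClosureTransvections {I : Ideal R} {i j : Fin 2} (hij : i ≠ j)
    {x : R} (hx : x ∈ I) :
    SpecialLinearGroup.transvection hij x ∈ normalClosureTransvections I := by
  have h₀₁ {y : R} (hy : y ∈ I) : τ₀₁ y ∈ normalClosureTransvections I :=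
    Subgroup.subset_normalClosure ⟨y, hy, rfl⟩
  fin_cases i <;> fin_cases j
  · exact absurd rfl hij
  · exact h₀₁ hx
  · rw [eq_mul_inv_of_mul_eq (transvection_one_zero_mul_swap x)]
    exact Subgroup.Normal.conj_mem inferInstance _ (h₀₁ (neg_mem hx)) _
  · exact absurd rfl hij

theorem mk_transvection_eq_of_sub_mem {I : Ideal R} {i j : Fin 2} (hij : i ≠ j) {a b : R}
    (hab : a - b ∈ I) :
    (SpecialLinearGroup.transvection hij a : SL(2, R) ⧸ normalClosureTransvections I) =
      SpecialLinearGroup.transvection hij b := by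
  rw [QuotientGroup.eq, SpecialLinearGroup.transvection_inv,
    ← SpecialLinearGroup.transvection_add]
  refine transvection_mem_normalClosureTransvections hij ?_
  rw [neg_add_eq_sub, ← neg_sub]
  exact I.neg_mem hab

theorem normalClosureTransvections_le_of_subset_quasiLevelSL {I : Ideal R}
    {Γ : Subgroup SL(2, R)} (h : (I : Set R) ⊆ quasiLevelSL Γ) :
    normalClosureTransvections I ≤ Γ := by
  refine (Subgroup.normalClosure_le_normal ?_).trans Γ.normalCore_le
  rintro _ ⟨x, hx, rfl⟩ g
  have hunip : SpecialLinearGroup.toGL (τ₀₁ x) = unipGL x := by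
    ext i j
    fin_cases i <;> fin_cases j <;> simp [unipGL, SpecialLinearGroup.transvection_coe]
  have := h hx (SpecialLinearGroup.toGL g⁻¹)
  rwa [← hunip, ← map_inv, inv_inv, ← map_mul, ← map_mul,
    Subgroup.mem_map_iff_mem SpecialLinearGroup.toGL_injective] at this

end CommRing

section EuclideanDomain

variable {R : Type*} [EuclideanDomain R]

theorem closure_transvections_eq_top :
    Subgroup.closure (Set.range τ₀₁ ∪ Set.range τ₁₀ : Set SL(2, R)) = ⊤ := by
  set H := Subgroup.closure (Set.range τ₀₁ ∪ Set.range τ₁₀ : Set SL(2, R))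
  have h₀₁ (x : R) : τ₀₁ x ∈ H := Subgroup.subset_closure (Or.inl ⟨x, rfl⟩)
  have h₁₀ (x : R) : τ₁₀ x ∈ H := Subgroup.subset_closure (Or.inr ⟨x, rfl⟩)
  have hswap : τ₀₁ (-1) * τ₁₀ 1 * τ₀₁ (-1) ∈ H := mul_mem (mul_mem (h₀₁ _) (h₁₀ _)) (h₀₁ _)
  suffices ∀ c : R, ∀ M : SL(2, R), M 1 0 = c → M ∈ H from
    (Subgroup.eq_top_iff' H).2 fun M => this _ M rfl
  intro c
  induction c using (EuclideanDomain.r_wellFounded (R := R)).induction with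
  | h c ih =>
  intro M hc
  rcases eq_or_ne c 0 with rfl | hc0
  · rw [eq_transvection_prod_of_apply_one_zero_eq_zero M hc]
    exact mul_mem (mul_mem (mul_mem (h₀₁ _) (h₁₀ _)) (h₀₁ _)) hswap
  · have hred : τ₀₁ (-1) * τ₁₀ 1 * τ₀₁ (-1) * τ₀₁ (-(M 0 0 / c)) * M ∈ H := by
      refine ih _ (EuclideanDomain.mod_lt (M 0 0) hc0) _ ?_
      rw [swap_mul_transvection_mul_apply_one_zero, hc, EuclideanDomain.mod_eq_sub_mul_div]
      ring
    exact (H.mul_mem_cancel_left (mul_mem hswap (h₀₁ _))).1 hred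

theorem fg_quotient_normalClosureTransvections (I : Ideal R) [Finite (R ⧸ I)] :
    Group.FG (SL(2, R) ⧸ normalClosureTransvections I) := by
  let π := QuotientGroup.mk' (normalClosureTransvections I)
  have hrange {i j : Fin 2} (hij : i ≠ j) :
      Set.range (π ∘ SpecialLinearGroup.transvection hij) =
        Set.range fun x : R ⧸ I => π (SpecialLinearGroup.transvection hij x.out) := by
    rw [← Ideal.Quotient.mk_surjective.range_comp]
    congr 1
    funext a
    exact mk_transvection_eq_of_sub_mem hij
      (Ideal.Quotient.eq.1 (Ideal.Quotient.mk_out (Ideal.Quotient.mk I a)).symm)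
  refine Group.fg_iff.2 ⟨π '' (Set.range τ₀₁ ∪ Set.range τ₁₀), ?_, ?_⟩
  · rw [← MonoidHom.map_closure, closure_transvections_eq_top, ← MonoidHom.range_eq_map,
      MonoidHom.range_eq_top]
    exact QuotientGroup.mk'_surjective _
  · rw [Set.image_union, ← Set.range_comp, ← Set.range_comp, hrange, hrange]
    exact (Set.finite_range _).union (Set.finite_range _)

theorem countable_setOf_finiteIndex_of_nonzero_level [Countable R]
    (hfin : ∀ I : Ideal R, I ≠ ⊥ → Finite (R ⧸ I)) :
    {Γ : Subgroup SL(2, R) | Γ.FiniteIndex ∧ ∃ I : Ideal R, I ≠ ⊥ ∧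
      (I : Set R) ⊆ quasiLevelSL Γ}.Countable := by
  have : Countable (Ideal R) := Function.Injective.countable
    (f := fun I : Ideal R => Submodule.IsPrincipal.generator I)
    fun I J (h : Submodule.IsPrincipal.generator I = Submodule.IsPrincipal.generator J) => by
      rw [← Ideal.span_singleton_generator I, h, Ideal.span_singleton_generator]
  have : Countable (Matrix (Fin 2) (Fin 2) R) := inferInstanceAs (Countable (Fin 2 → Fin 2 → R))
  have : Countable SL(2, R) := Subtype.countable
  refine (Set.countable_iUnion fun I : {I : Ideal R // I ≠ ⊥} =>
    have := hfin I I.2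
    have := fg_quotient_normalClosureTransvections I.1
    Subgroup.countable_setOf_finiteIndex_and_le (normalClosureTransvections I.1)).mono ?_
  rintro Γ ⟨hΓ, I, hI, hql⟩
  exact Set.mem_iUnion.2 ⟨⟨I, hI⟩, hΓ, normalClosureTransvections_le_of_subset_quasiLevelSL hql⟩

end EuclideanDomain

end Matrix.SL2

/-- For `A = Fq[T]`, the set of finite-index subgroups of `SL₂(A)` with
nonzero level (i.e. whose quasi-level contains a nonzero ideal of `A`) is countable. -/
theorem countable_finiteIndex_subgroups_of_nonzero_level
    (Fq : Type*) [Field Fq] [Fintype Fq] :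
    {Γ : Subgroup (Matrix.SpecialLinearGroup (Fin 2) (Polynomial Fq)) |
      Γ.FiniteIndex ∧ ∃ I : Ideal (Polynomial Fq), I ≠ ⊥ ∧
        (I : Set (Polynomial Fq)) ⊆ quasiLevelSL Γ}.Countable := by
  have : Countable (AddMonoidAlgebra Fq ℕ) := AddMonoidAlgebra.coeff_injective.countable
  have : Countable Fq[X] := Polynomial.toFinsupp_injective.countable
  exact Matrix.SL2.countable_setOf_finiteIndex_of_nonzero_level fun _ =>
    Polynomial.finite_quotient_of_ne_bot
end

section
/- Let q be a prime power and A = F_q[T]. The set of finite-index subgroups of SL₂(A) is uncountable. -/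
/-!
The upper unipotent matrices `[[1, f], [0, 1]]` and the lower ones `[[1, 0], [T g, 1]]`
(`f g : A = F_q[T]`) generate a free product `A * T A` inside `SL₂(A)`: this is a ping-pong on the
degrees of the first column. A Euclidean reduction shows that this free product contains every
matrix with `a ≡ 1` and `c ≡ 0 mod T`, so it contains the kernel of reduction mod `T` and has
finite index. It surjects onto `A ≅ ⊕_ℕ F_q`, where the kernels of the functionals
`p ↦ ∑_{n ∈ S} p_n`, `S ⊆ ℕ`, are `2^ℵ₀` distinct subgroups of finite index.
-/

open Matrix Polynomial

open scoped Pointwise MatrixGroups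

namespace Matrix.SpecialLinearGroup

variable {ι R : Type*} [DecidableEq ι] [Fintype ι] [CommRing R]

def transvectionHom {i j : ι} (hij : i ≠ j) : Multiplicative R →* SpecialLinearGroup ι R where
  toFun b := transvection hij b.toAdd
  map_one' := transvection_coeff_zero hij
  map_mul' b₁ b₂ := transvection_add hij b₁.toAdd b₂.toAdd

lemma transvection_mul_apply_same {i j : ι} (hij : i ≠ j) (b : R) (M : SpecialLinearGroup ι R)
    (l : ι) : (transvection hij b * M) i l = M i l + b * M j l :=
  Matrix.transvection_mul_apply_same i j l b M.1

lemma transvection_mul_apply_of_ne {i j : ι} (hij : i ≠ j) (b : R) (M : SpecialLinearGroup ι R)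
    {k : ι} (hk : k ≠ i) (l : ι) : (transvection hij b * M) k l = M k l :=
  Matrix.transvection_mul_apply_of_ne i j k l hk b M.1

end Matrix.SpecialLinearGroup

notation "τ₀₁" => Matrix.SpecialLinearGroup.transvection (zero_ne_one' (Fin 2))
notation "τ₁₀" => Matrix.SpecialLinearGroup.transvection (one_ne_zero' (Fin 2))

lemma Polynomial.degree_lt_degree_X_mul_mul {R : Type*} [Semiring R] [Nontrivial R]
    [NoZeroDivisors R] {p q : R[X]} (hp : p ≠ 0) (hq : q ≠ 0) :
    q.degree < (X * p * q).degree := by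
  rw [degree_mul, degree_mul, degree_X, degree_eq_natDegree hp, degree_eq_natDegree hq]
  norm_cast
  omega

section PingPong

variable (R : Type*) [CommRing R]

noncomputable def unipotentPair : Bool → Multiplicative R[X] →* SL(2, R[X])
  | true => SpecialLinearGroup.transvectionHom (zero_ne_one' (Fin 2))
  | false => (SpecialLinearGroup.transvectionHom (one_ne_zero' (Fin 2))).comp
      (AddMonoidHom.toMultiplicative (AddMonoidHom.mulLeft X))

noncomputable def unipotentCoprodHom :
    Monoid.CoprodI (fun _ : Bool => Multiplicative R[X]) →* SL(2, R[X]) :=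
  Monoid.CoprodI.lift (unipotentPair R)

variable {R}

lemma unipotentCoprodHom_of_true (b : R[X]) :
    unipotentCoprodHom R (Monoid.CoprodI.of (i := true) (.ofAdd b)) = τ₀₁ b :=
  Monoid.CoprodI.lift_of _ _

lemma unipotentCoprodHom_of_false (b : R[X]) :
    unipotentCoprodHom R (Monoid.CoprodI.of (i := false) (.ofAdd b)) = τ₁₀ (X * b) :=
  Monoid.CoprodI.lift_of _ _

def pingPongSet : Bool → Set SL(2, R[X])
  | true => {M | M 0 0 ≠ 0 ∧ (M 1 0).degree ≤ (M 0 0).degree}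
  | false => {M | (M 0 0).degree < (M 1 0).degree}

lemma pingPongSet_nonempty [Nontrivial R] : ∀ b, (pingPongSet (R := R) b).Nonempty
  | true => ⟨1, by simp [pingPongSet]⟩
  | false => ⟨τ₁₀ X, by simp [pingPongSet, SpecialLinearGroup.transvection_coe]⟩

lemma pingPongSet_pairwise_disjoint : Pairwise (Function.onFun Disjoint (pingPongSet (R := R)))
  | true, true, h | false, false, h => (h rfl).elim
  | true, false, _ => Set.disjoint_left.2 fun _ h h' => h.2.not_gt h'
  | false, true, _ => Set.disjoint_left.2 fun _ h' h => h.2.not_gt h'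

variable [IsDomain R]

lemma transvection_mul_mem_pingPongSet_true {b : R[X]} (hb : b ≠ 0) {M : SL(2, R[X])}
    (hM : M ∈ pingPongSet false) : τ₀₁ b * M ∈ pingPongSet true := by
  have hle : (M 1 0).degree ≤ (b * M 1 0).degree := by
    simpa only [mul_comm] using degree_le_mul_left (M 1 0) hb
  have hdom : (M 0 0).degree < (b * M 1 0).degree := hM.trans_le hle
  simp only [pingPongSet, Set.mem_ofPred_eq, SpecialLinearGroup.transvection_mul_apply_same,
    SpecialLinearGroup.transvection_mul_apply_of_ne _ _ _ (one_ne_zero' (Fin 2)),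
    degree_add_eq_right_of_degree_lt hdom]
  exact ⟨ne_zero_of_degree_gt (hdom.trans_eq (degree_add_eq_right_of_degree_lt hdom).symm), hle⟩

lemma transvection_mul_mem_pingPongSet_false {b : R[X]} (hb : b ≠ 0) {M : SL(2, R[X])}
    (hM : M ∈ pingPongSet true) : τ₁₀ (X * b) * M ∈ pingPongSet false := by
  have hdom := degree_lt_degree_X_mul_mul hb hM.1
  simp only [pingPongSet, Set.mem_ofPred_eq, SpecialLinearGroup.transvection_mul_apply_same,
    SpecialLinearGroup.transvection_mul_apply_of_ne _ _ _ (zero_ne_one' (Fin 2)),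
    degree_add_eq_right_of_degree_lt (hM.2.trans_lt hdom)]
  exact hdom

theorem unipotentCoprodHom_injective : Function.Injective (unipotentCoprodHom R) := by
  refine Monoid.CoprodI.lift_injective_of_ping_pong _ (.inr ⟨true, ?_⟩) (pingPongSet (R := R))
    pingPongSet_nonempty pingPongSet_pairwise_disjoint ?_
  · exact Cardinal.ofNat_le_aleph0.trans (Cardinal.aleph0_le_mk _)
  rintro (_ | _) (_ | _) hij b hb
  · exact (hij rfl).elim
  · exact Set.smul_set_subset_iff.2 fun M hM =>
      transvection_mul_mem_pingPongSet_false (b := b.toAdd) hb hM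
  · exact Set.smul_set_subset_iff.2 fun M hM =>
      transvection_mul_mem_pingPongSet_true (b := b.toAdd) hb hM
  · exact (hij rfl).elim

end PingPong

section Generation

variable {K : Type*} [Field K]

lemma Polynomial.exists_degree_add_X_mul_mul_lt {c r : K[X]} (hr : r ≠ 0)
    (hrc : r.degree < c.degree) : ∃ g, (c + X * g * r).degree < c.degree := by
  refine ⟨-(c / r).divX, ?_⟩
  have hrem : c + X * -(c / r).divX * r = c % r + C ((c / r).coeff 0) * r := by
    linear_combination -EuclideanDomain.mod_add_div c r - r * divX_mul_X_add (c / r)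
  rw [hrem, ← smul_eq_C_mul]
  exact (degree_add_le _ _).trans_lt <| max_lt ((degree_mod_lt c hr).trans hrc)
    ((degree_smul_le _ _).trans_lt hrc)

lemma transvection_mem_range_unipotentCoprodHom (b : K[X]) :
    τ₀₁ b ∈ (unipotentCoprodHom K).range :=
  ⟨_, unipotentCoprodHom_of_true b⟩

lemma transvection_X_mul_mem_range_unipotentCoprodHom (b : K[X]) :
    τ₁₀ (X * b) ∈ (unipotentCoprodHom K).range :=
  ⟨_, unipotentCoprodHom_of_false b⟩

lemma eq_transvection_of_lowerLeft_eq_zero {M : SL(2, K[X])} (hc : M 1 0 = 0)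
    (ha : (M 0 0).eval 0 = 1) : M = τ₀₁ (M 0 1) := by
  have hdet : M 0 0 * M 1 1 = 1 := by
    have := M.det_coe
    rwa [det_fin_two, hc, mul_zero, sub_zero] at this
  have ha₁ : M 0 0 = 1 := by
    rw [eq_C_of_natDegree_eq_zero (natDegree_eq_zero_of_isUnit (.of_mul_eq_one _ hdet)),
      coeff_zero_eq_eval_zero, ha, C_1]
  rw [ha₁, one_mul] at hdet
  ext i j
  fin_cases i <;> fin_cases j <;> simp [SpecialLinearGroup.transvection_coe, ha₁, hc, hdet]

lemma exists_transvection_mul_transvection_mul_degree_lt {M : SL(2, K[X])} (hc₀ : M 1 0 ≠ 0)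
    (ha : (M 0 0).eval 0 = 1) (hc : (M 1 0).eval 0 = 0) :
    ∃ f g : K[X], ((τ₁₀ (X * g) * (τ₀₁ f * M) : SL(2, K[X])) 1 0).degree < (M 1 0).degree ∧
      ((τ₁₀ (X * g) * (τ₀₁ f * M) : SL(2, K[X])) 0 0).eval 0 = 1 ∧
      ((τ₁₀ (X * g) * (τ₀₁ f * M) : SL(2, K[X])) 1 0).eval 0 = 0 := by
  set a₁ := (τ₀₁ (-(M 0 0 / M 1 0)) * M) 0 0 with ha₁
  have hmod : a₁ = M 0 0 % M 1 0 := by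
    rw [ha₁, SpecialLinearGroup.transvection_mul_apply_same, EuclideanDomain.mod_eq_sub_mul_div]
    ring
  have heval : a₁.eval 0 = 1 := by
    simp [ha₁, SpecialLinearGroup.transvection_mul_apply_same, ha, hc]
  obtain ⟨g, hg⟩ := exists_degree_add_X_mul_mul_lt (fun h => by simp [h] at heval)
    (hmod ▸ degree_mod_lt _ hc₀)
  refine ⟨-(M 0 0 / M 1 0), g, ?_, ?_, ?_⟩ <;>
    simp only [SpecialLinearGroup.transvection_mul_apply_same,
      SpecialLinearGroup.transvection_mul_apply_of_ne _ _ _ (zero_ne_one' (Fin 2)),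
      SpecialLinearGroup.transvection_mul_apply_of_ne _ _ _ (one_ne_zero' (Fin 2)), ← ha₁]
  · exact hg
  · exact heval
  · simp [hc]

theorem mem_range_unipotentCoprodHom_of_eval_zero {M : SL(2, K[X])}
    (ha : (M 0 0).eval 0 = 1) (hc : (M 1 0).eval 0 = 0) : M ∈ (unipotentCoprodHom K).range := by
  induction hd : (M 1 0).degree using WellFoundedLT.induction generalizing M with
  | ind d ih =>
    by_cases hc₀ : M 1 0 = 0
    · rw [eq_transvection_of_lowerLeft_eq_zero hc₀ ha]
      exact transvection_mem_range_unipotentCoprodHom _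
    obtain ⟨f, g, hlt, ha', hc'⟩ := exists_transvection_mul_transvection_mul_degree_lt hc₀ ha hc
    have hM : M = (τ₀₁ f)⁻¹ * ((τ₁₀ (X * g))⁻¹ * (τ₁₀ (X * g) * (τ₀₁ f * M))) := by group
    rw [hM]
    exact mul_mem (inv_mem (transvection_mem_range_unipotentCoprodHom f))
      (mul_mem (inv_mem (transvection_X_mul_mem_range_unipotentCoprodHom g))
        (ih _ (hd ▸ hlt) ha' hc' rfl))

end Generation

theorem ker_map_evalRingHom_zero_le_range_unipotentCoprodHom (K : Type*) [Field K] :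
    (SpecialLinearGroup.map (evalRingHom (0 : K))).ker ≤ (unipotentCoprodHom K).range := by
  intro M hM
  have h (i j : Fin 2) : (M i j).eval 0 = (1 : Matrix (Fin 2) (Fin 2) K) i j :=
    congr($((MonoidHom.mem_ker).1 hM) i j)
  exact mem_range_unipotentCoprodHom_of_eval_zero (by simpa using h 0 0) (by simpa using h 1 0)

instance finiteIndex_range_unipotentCoprodHom (K : Type*) [Field K] [Finite K] :
    (unipotentCoprodHom K).range.FiniteIndex :=
  Subgroup.finiteIndex_of_le (ker_map_evalRingHom_zero_le_range_unipotentCoprodHom K)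

section FiniteIndexSubgroups

variable {G H : Type*} [Group G] [Group H]

theorem not_countable_finiteIndex_of_injective {φ : H →* G} (hφ : Function.Injective φ)
    [φ.range.FiniteIndex] (hH : ¬ {K : Subgroup H | K.FiniteIndex}.Countable) :
    ¬ {Γ : Subgroup G | Γ.FiniteIndex}.Countable := fun hG =>
  hH <| Set.MapsTo.countable_of_injOn (f := Subgroup.map φ)
    (fun K (hK : K.FiniteIndex) => show (K.map φ).FiniteIndex from ⟨by
      rw [K.index_map_of_injective hφ]
      exact mul_ne_zero hK.index_ne_zero Subgroup.FiniteIndex.index_ne_zero⟩)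
    (Subgroup.map_injective hφ).injOn hG

theorem not_countable_finiteIndex_of_surjective {ρ : G →* H} (hρ : Function.Surjective ρ)
    (hH : ¬ {K : Subgroup H | K.FiniteIndex}.Countable) :
    ¬ {Γ : Subgroup G | Γ.FiniteIndex}.Countable := fun hG =>
  hH <| Set.MapsTo.countable_of_injOn (f := Subgroup.comap ρ)
    (fun K (hK : K.FiniteIndex) => show (K.comap ρ).FiniteIndex from ⟨by
      rw [Subgroup.index_comap_of_surjective _ hρ]
      exact hK.index_ne_zero⟩)
    (Subgroup.comap_injective hρ).injOn hG

end FiniteIndexSubgroups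

lemma not_countable_univ_set_nat : ¬ (Set.univ : Set (Set ℕ)).Countable := fun h =>
  have := Set.countable_univ_iff.1 h
  let ⟨f, hf⟩ := exists_injective_nat (Set ℕ)
  Function.cantor_injective f hf

section CoeffSum

variable {R : Type*} [Ring R]

open Classical in
noncomputable def Polynomial.coeffSum (S : Set ℕ) : R[X] →ₗ[R] R :=
  lsum fun n => if n ∈ S then LinearMap.id else 0

lemma Polynomial.coeffSum_monomial_one (S : Set ℕ) (n : ℕ) [Decidable (n ∈ S)] :
    coeffSum S (monomial n (1 : R)) = if n ∈ S then 1 else 0 := by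
  rw [coeffSum, lsum_apply, sum_monomial_index]
  all_goals split_ifs <;> simp

theorem Polynomial.not_countable_finiteIndex_subgroup [Nontrivial R] [Finite R] :
    ¬ {Γ : Subgroup (Multiplicative R[X]) | Γ.FiniteIndex}.Countable := by
  classical
  let Γ (S : Set ℕ) : Subgroup (Multiplicative R[X]) :=
    (AddMonoidHom.toMultiplicative (coeffSum S).toAddMonoidHom).ker
  have hmem (S : Set ℕ) (n : ℕ) : Multiplicative.ofAdd (monomial n (1 : R)) ∈ Γ S ↔ n ∉ S := by
    simp [Γ, coeffSum_monomial_one]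
  refine fun h => not_countable_univ_set_nat <| Set.MapsTo.countable_of_injOn (f := Γ)
    (fun S _ => Subgroup.finiteIndex_ker _) (fun S _ T _ hST => Set.ext fun n => ?_) h
  simpa only [hmem, not_iff_not] using SetLike.ext_iff.1 hST (.ofAdd (monomial n 1))

end CoeffSum

/-- For `A = Fq[T]`, the set of finite-index subgroups of `SL₂(A)` is
uncountable. -/
theorem uncountable_finiteIndex_subgroups (Fq : Type*) [Field Fq] [Fintype Fq] :
    ¬ {Γ : Subgroup (Matrix.SpecialLinearGroup (Fin 2) (Polynomial Fq)) |
        Γ.FiniteIndex}.Countable := by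
  have hproj : Function.Surjective
      (Monoid.CoprodI.lift (M := fun _ : Bool => Multiplicative Fq[X])
        (Pi.mulSingle true (MonoidHom.id _))) :=
    fun x => ⟨.of (i := true) x, by simp⟩
  exact not_countable_finiteIndex_of_injective unipotentCoprodHom_injective
    (not_countable_finiteIndex_of_surjective hproj not_countable_finiteIndex_subgroup)
end

section
/- Let q be a prime power and A = F_q[T]. The group SL₂(A) is not finitely generated. -/
/-!
Euclid's algorithm on the first column writes every element of `SL₂(K[X])` as a product of
`w = !![0, 1; -1, 0]`, diagonal matrices and elementary matrices `!![1, f; 0, 1]`, so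
`SL₂(K[X])` is the increasing union of the subgroups `H n` generated by these with `deg f ≤ n`.
Right multiplication by a generator of `H n` acts on each row `(a, b)` by a step of the
Euclidean algorithm, a swap, or a rescaling, and all three preserve the property that every
partial quotient of the continued fraction of `b / a` has degree at most `n`. The row
`(1, X ^ (n + 1))` does not have this property, so every `H n` is proper, and a finite
generating set, lying in some `H n`, cannot exist.
-/

open Polynomial

namespace Polynomial

variable {K : Type*} [Field K] {n : ℕ} {a b q r : K[X]}

theorem mul_add_mod_eq_of_degree_lt (hr : r.degree < a.degree) : (a * q + r) % a = r := by
  rw [mod_eq_of_dvd_sub (p₂ := r) (by simp), (mod_eq_self_iff (ne_zero_of_degree_gt hr)).2 hr]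

theorem mul_add_div_eq_of_degree_lt (hr : r.degree < a.degree) : (a * q + r) / a = q := by
  have h := EuclideanDomain.div_add_mod (a * q + r) a
  rw [mul_add_mod_eq_of_degree_lt hr, add_left_inj] at h
  exact mul_left_cancel₀ (ne_zero_of_degree_gt hr) h

theorem exists_eq_mul_unit_add_of_degree_eq (hb : b ≠ 0) (h : a.degree = b.degree) :
    ∃ (u : K[X]ˣ) (r : K[X]), b = a * u + r ∧ r.degree < a.degree := by
  have ha : a ≠ 0 := by rintro rfl; exact hb (degree_eq_bot.1 (by rw [← h, degree_zero]))
  have hc : b.leadingCoeff / a.leadingCoeff ≠ 0 := by simp [ha, hb]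
  refine ⟨(isUnit_C.2 hc.isUnit).unit, b - a * C (b.leadingCoeff / a.leadingCoeff), by simp, ?_⟩
  rw [h]
  refine degree_sub_lt_left (by rw [degree_mul_C hc, h]) hb ?_
  rw [leadingCoeff_mul, leadingCoeff_C, mul_div_cancel₀ _ (leadingCoeff_ne_zero.2 ha)]

/-- The quotients `b / a`, `a / (b % a)`, … met by the Euclidean algorithm on `(a, b)`, i.e. the
partial quotients of the continued fraction of `b / a`, all have degree at most `n`. -/
def PartialQuotientsDegreeLE (n : ℕ) (a b : K[X]) : Prop :=
  a ≠ 0 → (b / a).degree ≤ n ∧ PartialQuotientsDegreeLE n (b % a) a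
termination_by a.degree
decreasing_by exact degree_mod_lt b ‹_›

theorem partialQuotientsDegreeLE_zero_left (n : ℕ) (b : K[X]) :
    PartialQuotientsDegreeLE n 0 b := by
  rw [PartialQuotientsDegreeLE]
  exact fun h => (h rfl).elim

theorem partialQuotientsDegreeLE_zero_right (n : ℕ) (a : K[X]) :
    PartialQuotientsDegreeLE n a 0 := by
  rw [PartialQuotientsDegreeLE]
  intro _
  simp [partialQuotientsDegreeLE_zero_left]

theorem partialQuotientsDegreeLE_mul_add_iff (hr : r.degree < a.degree) :
    PartialQuotientsDegreeLE n a (a * q + r) ↔ q.degree ≤ n ∧ PartialQuotientsDegreeLE n r a := by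
  rw [PartialQuotientsDegreeLE, mul_add_div_eq_of_degree_lt hr, mul_add_mod_eq_of_degree_lt hr]
  exact ⟨fun h => h (ne_zero_of_degree_gt hr), fun h _ => h⟩

theorem partialQuotientsDegreeLE_one_iff : PartialQuotientsDegreeLE n 1 b ↔ b.degree ≤ n := by
  simpa [partialQuotientsDegreeLE_zero_left] using
    partialQuotientsDegreeLE_mul_add_iff (n := n) (q := b) (r := 0) (a := 1) (by simp)

theorem partialQuotientsDegreeLE_comm_of_degree_lt (h : b.degree < a.degree) :
    PartialQuotientsDegreeLE n a b ↔ PartialQuotientsDegreeLE n b a := by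
  simpa using partialQuotientsDegreeLE_mul_add_iff (n := n) (q := 0) h

namespace PartialQuotientsDegreeLE

theorem mul_add {f : K[X]} (h : PartialQuotientsDegreeLE n a b) (hf : f.degree ≤ n) :
    PartialQuotientsDegreeLE n a (a * f + b) := by
  rcases eq_or_ne a 0 with rfl | ha
  · exact partialQuotientsDegreeLE_zero_left n _
  rw [PartialQuotientsDegreeLE] at h
  obtain ⟨hq, hr⟩ := h ha
  have hdecomp : a * f + b = a * (f + b / a) + b % a := by
    rw [_root_.mul_add, add_assoc, EuclideanDomain.div_add_mod]
  rw [hdecomp, partialQuotientsDegreeLE_mul_add_iff (degree_mod_lt b ha)]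
  exact ⟨(degree_add_le _ _).trans (max_le hf hq), hr⟩

theorem mul_units {a b : K[X]} (h : PartialQuotientsDegreeLE n a b) (u v : K[X]ˣ) :
    PartialQuotientsDegreeLE n (a * (u : K[X])) (b * (v : K[X])) := by
  rcases eq_or_ne a 0 with rfl | ha
  · simpa using partialQuotientsDegreeLE_zero_left n _
  rw [PartialQuotientsDegreeLE] at h
  obtain ⟨hq, hr⟩ := h ha
  have hdecomp : b * v = a * u * (↑u⁻¹ * v * (b / a)) + b % a * v := by
    conv_lhs => rw [← EuclideanDomain.div_add_mod b a]
    linear_combination (a * v * (b / a)) * (u.mul_inv).symm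
  have hr_lt : (b % a * v).degree < (a * u).degree := by
    rw [degree_mul, degree_mul, degree_coe_units, degree_coe_units, add_zero, add_zero]
    exact degree_mod_lt b ha
  rw [hdecomp, partialQuotientsDegreeLE_mul_add_iff hr_lt]
  refine ⟨?_, hr.mul_units v u⟩
  rwa [← Units.val_mul, mul_comm, degree_mul, degree_coe_units, add_zero]
termination_by a.degree
decreasing_by exact degree_mod_lt b ha

theorem symm (h : PartialQuotientsDegreeLE n a b) : PartialQuotientsDegreeLE n b a := by
  rcases eq_or_ne a 0 with rfl | ha
  · exact partialQuotientsDegreeLE_zero_right n b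
  rcases eq_or_ne b 0 with rfl | hb
  · exact partialQuotientsDegreeLE_zero_left n a
  rcases lt_trichotomy b.degree a.degree with hlt | heq | hgt
  · exact (partialQuotientsDegreeLE_comm_of_degree_lt hlt).1 h
  · -- `b = a u + r`, hence `a = b u⁻¹ - r u⁻¹`: both pairs reduce to `(r, a)`, resp. `(r, b)`.
    obtain ⟨u, r, hb_eq, hr⟩ := exists_eq_mul_unit_add_of_degree_eq hb heq.symm
    have hra : PartialQuotientsDegreeLE n r a :=
      ((partialQuotientsDegreeLE_mul_add_iff hr).1 (hb_eq ▸ h)).2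
    have hrb : PartialQuotientsDegreeLE n r b := by
      have hrau : PartialQuotientsDegreeLE n r (a * u) := by simpa using hra.mul_units 1 u
      simpa [hb_eq, add_comm] using hrau.mul_add (f := 1) (by simp)
    have hdeg : (r * ↑(-u⁻¹)).degree < b.degree := by
      rw [degree_mul, degree_coe_units, add_zero, heq]
      exact hr
    have ha_eq : b * ↑u⁻¹ + r * ↑(-u⁻¹) = a := by
      rw [hb_eq, Units.val_neg, add_mul, mul_assoc, Units.mul_inv]
      ring
    rw [← ha_eq, partialQuotientsDegreeLE_mul_add_iff hdeg, degree_coe_units]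
    have hrb' := hrb.mul_units (-u⁻¹) 1
    rw [Units.val_one, mul_one] at hrb'
    exact ⟨by exact_mod_cast Nat.zero_le n, hrb'⟩
  · exact (partialQuotientsDegreeLE_comm_of_degree_lt hgt).2 h

end PartialQuotientsDegreeLE

end Polynomial

theorem Group.not_fg_of_monotone_of_forall_ne_top {G : Type*} [Group G] {H : ℕ → Subgroup G}
    (hH : Monotone H) (hcover : ∀ g, ∃ n, g ∈ H n) (hne : ∀ n, H n ≠ ⊤) : ¬ Group.FG G := by
  rintro ⟨S, hS⟩
  choose N hN using hcover
  refine hne (S.sup N) (eq_top_iff.2 ?_)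
  rw [← hS, Subgroup.closure_le]
  exact fun s hs => hH (Finset.le_sup hs) (hN s)

open Matrix
open scoped MatrixGroups

namespace Matrix.SpecialLinearGroup

section CommRing

variable {R : Type*} [CommRing R]

def sl2W : SL(2, R) := ⟨!![0, 1; -1, 0], by simp⟩

def sl2Diag (u : Rˣ) : SL(2, R) := ⟨!![↑u, 0; 0, ↑u⁻¹], by simp⟩

@[simp]
theorem coe_sl2W : ((sl2W : SL(2, R)) : Matrix (Fin 2) (Fin 2) R) = !![0, 1; -1, 0] := rfl

@[simp]
theorem coe_sl2Diag (u : Rˣ) :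
    (sl2Diag u : Matrix (Fin 2) (Fin 2) R) = !![(u : R), 0; 0, ↑u⁻¹] := rfl

theorem coe_transvection_zero_one (f : R) :
    (transvection (zero_ne_one : (0 : Fin 2) ≠ 1) f : Matrix (Fin 2) (Fin 2) R) =
      !![1, f; 0, 1] := by
  ext i j
  fin_cases i <;> fin_cases j <;> simp [transvection_coe]

end CommRing

variable {K : Type*} [Field K]

def generatorsDegreeLE (n : ℕ) : Set SL(2, K[X]) :=
  insert sl2W (Set.range sl2Diag ∪ transvection zero_ne_one '' {f | f.degree ≤ n})

noncomputable def subgroupDegreeLE (n : ℕ) : Subgroup SL(2, K[X]) :=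
  Subgroup.closure (generatorsDegreeLE n)

theorem subgroupDegreeLE_mono : Monotone (subgroupDegreeLE (K := K)) := by
  intro m n hmn
  refine Subgroup.closure_mono (Set.insert_subset_insert (Set.union_subset_union_right _ ?_))
  exact Set.image_mono fun f (hf : f.degree ≤ m) => hf.trans (by exact_mod_cast hmn)

theorem sl2W_mem_subgroupDegreeLE (n : ℕ) : sl2W ∈ subgroupDegreeLE (K := K) n :=
  Subgroup.subset_closure (Set.mem_insert _ _)

theorem sl2Diag_mem_subgroupDegreeLE (n : ℕ) (u : K[X]ˣ) : sl2Diag u ∈ subgroupDegreeLE n :=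
  Subgroup.subset_closure (Or.inr (Or.inl ⟨u, rfl⟩))

theorem transvection_mem_subgroupDegreeLE {n : ℕ} {f : K[X]} (hf : f.degree ≤ n) :
    transvection zero_ne_one f ∈ subgroupDegreeLE n :=
  Subgroup.subset_closure (Or.inr (Or.inr ⟨f, hf, rfl⟩))

theorem exists_mem_subgroupDegreeLE_of_coe_one_zero {M : SL(2, K[X])} (hc : M 1 0 = 0) :
    ∃ n, M ∈ subgroupDegreeLE n := by
  have hdet : M 0 0 * M 1 1 = 1 := by
    have := M.det_coe
    rwa [det_fin_two, hc, mul_zero, sub_zero] at this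
  set u := (IsUnit.of_mul_eq_one _ hdet).unit
  have hu : (u : K[X]) = M 0 0 := rfl
  have hu_inv : ((u⁻¹ : K[X]ˣ) : K[X]) = M 1 1 := Units.inv_eq_of_mul_eq_one_right hdet
  have hM : M = sl2Diag u * transvection zero_ne_one (↑u⁻¹ * M 0 1) := by
    refine SpecialLinearGroup.ext _ _ fun i j => ?_
    fin_cases i <;> fin_cases j <;>
      simp [coe_mul, mul_apply, Fin.sum_univ_two, coe_transvection_zero_one, hc, hu, hu_inv,
        ← mul_assoc, hdet]
  exact ⟨_, hM ▸ mul_mem (sl2Diag_mem_subgroupDegreeLE _ u)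
    (transvection_mem_subgroupDegreeLE degree_le_natDegree)⟩

theorem exists_mem_subgroupDegreeLE (M : SL(2, K[X])) : ∃ n, M ∈ subgroupDegreeLE n := by
  by_cases hc : M 1 0 = 0
  · exact exists_mem_subgroupDegreeLE_of_coe_one_zero hc
  set q := M 0 0 / M 1 0
  set M' := sl2W * transvection zero_ne_one (-q) * M
  have hM' : M' 1 0 = -(M 0 0 - M 1 0 * q) := by
    simp [M', coe_mul, mul_apply, Fin.sum_univ_two, coe_transvection_zero_one, mul_comm,
      neg_add_eq_sub]
  have hdeg : (M' 1 0).degree < (M 1 0).degree := by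
    rw [hM', ← EuclideanDomain.mod_eq_sub_mul_div, degree_neg]
    exact degree_mod_lt _ hc
  obtain ⟨n, hn⟩ := exists_mem_subgroupDegreeLE M'
  have hM : M = transvection zero_ne_one q * sl2W⁻¹ * M' := by
    simp only [M', mul_assoc, inv_mul_cancel_left]
    rw [← mul_assoc, transvection_mul_neg, one_mul]
  refine ⟨max q.natDegree n, hM ▸ mul_mem (mul_mem ?_ (inv_mem (sl2W_mem_subgroupDegreeLE _)))
    (subgroupDegreeLE_mono (le_max_right _ _) hn)⟩
  exact transvection_mem_subgroupDegreeLE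
    (degree_le_natDegree.trans (by exact_mod_cast le_max_left _ _))
termination_by (M 1 0).degree
decreasing_by exact hdeg

def rowStabilizer (n : ℕ) : Submonoid SL(2, K[X]) where
  carrier := {M | ∀ a b, PartialQuotientsDegreeLE n a b →
    PartialQuotientsDegreeLE n (a * M 0 0 + b * M 1 0) (a * M 0 1 + b * M 1 1)}
  mul_mem' {M N} hM hN a b h := by
    convert hN _ _ (hM a b h) using 1 <;> simp only [coe_mul, mul_apply, Fin.sum_univ_two] <;> ring
  one_mem' a b h := by simpa using h

theorem subgroupDegreeLE_le_rowStabilizer (n : ℕ) :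
    (subgroupDegreeLE (K := K) n).toSubmonoid ≤ rowStabilizer n := by
  rw [subgroupDegreeLE, Subgroup.closure_toSubmonoid, Submonoid.closure_le]
  rintro M ((rfl | ⟨u, rfl⟩ | ⟨f, hf, rfl⟩) | (hM | ⟨u, hu⟩ | ⟨f, hf, hM⟩)) a b h
  · simpa using h.symm.mul_units (-1) 1
  · simpa using h.mul_units u u⁻¹
  · simpa [coe_transvection_zero_one, add_comm] using h.mul_add hf
  · obtain rfl := inv_eq_iff_eq_inv.1 hM
    simpa [coe_inv, adjugate_fin_two] using h.symm.mul_units 1 (-1)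
  · obtain rfl := inv_eq_iff_eq_inv.1 hu.symm
    simpa [coe_inv, adjugate_fin_two] using h.mul_units u⁻¹ u
  · obtain rfl := inv_eq_iff_eq_inv.1 hM.symm
    simpa [transvection_inv, coe_transvection_zero_one, add_comm] using
      h.mul_add (f := -f) (by rwa [degree_neg])

theorem transvection_X_pow_notMem_subgroupDegreeLE (n : ℕ) :
    transvection zero_ne_one (X ^ (n + 1) : K[X]) ∉ subgroupDegreeLE n := by
  intro hM
  have h : PartialQuotientsDegreeLE n 1 (X ^ (n + 1) : K[X]) := by
    simpa [coe_transvection_zero_one] using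
      subgroupDegreeLE_le_rowStabilizer n hM 1 0 (partialQuotientsDegreeLE_zero_right n 1)
  rw [partialQuotientsDegreeLE_one_iff, degree_X_pow, Nat.cast_le] at h
  omega

end Matrix.SpecialLinearGroup

theorem sl2_polynomial_not_fg_general (Fq : Type*) [Field Fq] :
    ¬ Group.FG (Matrix.SpecialLinearGroup (Fin 2) (Polynomial Fq)) :=
  Group.not_fg_of_monotone_of_forall_ne_top Matrix.SpecialLinearGroup.subgroupDegreeLE_mono
    Matrix.SpecialLinearGroup.exists_mem_subgroupDegreeLE fun n hn =>
      Matrix.SpecialLinearGroup.transvection_X_pow_notMem_subgroupDegreeLE n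
        (hn ▸ Subgroup.mem_top _)

/-- For `A = Fq[T]`, the group `SL₂(A)` is not finitely generated. -/
theorem sl2_polynomial_not_fg (Fq : Type*) [Field Fq] [Fintype Fq] :
    ¬ Group.FG (Matrix.SpecialLinearGroup (Fin 2) (Polynomial Fq)) :=
  sl2_polynomial_not_fg_general Fq
end

section
/- Let q be a prime power, A = F_q[T], and Γ a finite-index subgroup of GL₂(A). Then the quasi-level ql(Γ) is an F_q-linear subspace of A. -/
open Matrix Polynomial

/-- The quasi-level of a subgroup `Γ ≤ GL₂(R)`: the set of `a ∈ R` such that the unipotent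
matrix `[[1,a],[0,1]]` lies in `g Γ g⁻¹` for every `g ∈ GL₂(R)`. -/
def quasiLevelGL {R : Type*} [CommRing R] (Γ : Subgroup (GL (Fin 2) R)) : Set R :=
  {a : R | ∀ g : GL (Fin 2) R, g⁻¹ * unipGL a * g ∈ Γ}

lemma unipGL_mul {R : Type*} [CommRing R] (a b : R) :
    unipGL a * unipGL b = unipGL (a + b) := by
  apply Units.ext
  show (!![1, a; 0, 1] : Matrix (Fin 2) (Fin 2) R) * !![1, b; 0, 1] = !![1, a + b; 0, 1]
  simp [Matrix.mul_fin_two]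
  ring_nf

lemma unipGL_zero {R : Type*} [CommRing R] : unipGL (0 : R) = 1 := by
  apply Units.ext
  show (!![1, 0; 0, 1] : Matrix (Fin 2) (Fin 2) R) = 1
  simp [Matrix.one_fin_two]

/-- Diagonal matrix diag(c, 1) for a unit c. -/
def diagGL {R : Type*} [CommRing R] (c : Rˣ) : GL (Fin 2) R :=
  ⟨!![(c : R), 0; 0, 1], !![((c⁻¹ : Rˣ) : R), 0; 0, 1],
    by simp [Matrix.mul_fin_two, Matrix.one_fin_two],
    by simp [Matrix.mul_fin_two, Matrix.one_fin_two]⟩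

lemma diagGL_conj {R : Type*} [CommRing R] (c : Rˣ) (a : R) :
    diagGL c * unipGL a * (diagGL c)⁻¹ = unipGL ((c : R) * a) := by
  apply Units.ext
  show (!![(c : R), 0; 0, 1] : Matrix (Fin 2) (Fin 2) R) * !![1, a; 0, 1] *
      !![((c⁻¹ : Rˣ) : R), 0; 0, 1] = !![1, (c : R) * a; 0, 1]
  simp [Matrix.mul_fin_two]

/-- For `A = Fq[T]` and a finite-index subgroup `Γ ≤ GL₂(A)`, the quasi-level
`ql(Γ)` is an `Fq`-linear subspace of `A`. -/
theorem quasiLevel_is_subspace (Fq : Type*) [Field Fq] [Fintype Fq]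
    (Γ : Subgroup (GL (Fin 2) (Polynomial Fq))) (hΓ : Γ.FiniteIndex) :
    ∃ S : Submodule Fq (Polynomial Fq), (S : Set (Polynomial Fq)) = quasiLevelGL Γ := by
  refine ⟨{ carrier := quasiLevelGL Γ
            add_mem' := ?_
            zero_mem' := ?_
            smul_mem' := ?_ }, rfl⟩
  · intro a b ha hb g
    rw [← unipGL_mul]
    have : g⁻¹ * (unipGL a * unipGL b) * g =
        (g⁻¹ * unipGL a * g) * (g⁻¹ * unipGL b * g) := by group
    rw [this]
    exact Γ.mul_mem (ha g) (hb g)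
  · intro g
    rw [unipGL_zero]
    simpa using Γ.one_mem
  · intro c a ha
    rcases eq_or_ne c 0 with rfl | hc
    · intro g
      rw [zero_smul, unipGL_zero]
      simpa using Γ.one_mem
    · intro g
      have hcu : IsUnit (Polynomial.C c) := Polynomial.isUnit_C.mpr hc.isUnit
      obtain ⟨u, hu⟩ := hcu
      have key : unipGL (c • a) = diagGL u * unipGL a * (diagGL u)⁻¹ := by
        rw [diagGL_conj, hu, Polynomial.smul_eq_C_mul]
      rw [key]
      have : g⁻¹ * (diagGL u * unipGL a * (diagGL u)⁻¹) * g =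
          ((diagGL u)⁻¹ * g)⁻¹ * unipGL a * ((diagGL u)⁻¹ * g) := by group
      rw [this]
      exact ha _
end

section
/- Let q be a prime power, A = F_q[T], and Γ a finite-index subgroup of GL₂(A). Then the quasi-level ql(Γ) has finite codimension in A as an F_q-vector space, i.e., the quotient F_q-vector space A / ql(Γ) is finite-dimensional. -/
open Matrix Polynomial

lemma unipGL_inv {R : Type*} [CommRing R] (a : R) : (unipGL a)⁻¹ = unipGL (-a) := by
  apply Units.ext
  rfl

/-- For `A = Fq[T]` and a finite-index subgroup `Γ ≤ GL₂(A)`, the quasi-level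
`ql(Γ)` (an `Fq`-subspace of `A`) has finite codimension: the quotient `A / ql(Γ)` is a
finite-dimensional `Fq`-vector space. -/
theorem quasiLevel_finite_codimension (Fq : Type*) [Field Fq] [Fintype Fq]
    (Γ : Subgroup (GL (Fin 2) (Polynomial Fq))) (hΓ : Γ.FiniteIndex)
    (S : Submodule Fq (Polynomial Fq)) (hS : (S : Set (Polynomial Fq)) = quasiLevelGL Γ) :
    FiniteDimensional Fq (Polynomial Fq ⧸ S) := by
  haveI := hΓ
  set N := Γ.normalCore with hNdef
  haveI : N.FiniteIndex := Subgroup.finiteIndex_normalCore Γ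
  haveI hfin : Finite (GL (Fin 2) (Polynomial Fq) ⧸ N) :=
    Nat.finite_of_card_ne_zero (by
      have : N.index ≠ 0 := Subgroup.FiniteIndex.index_ne_zero
      simpa [Subgroup.index] using this)
  -- key: unipGL a ∈ N ↔ a ∈ S
  have hkey : ∀ a : Polynomial Fq, unipGL a ∈ N ↔ a ∈ S := by
    intro a
    constructor
    · intro h
      have : a ∈ quasiLevelGL Γ := by
        intro g
        have := h g⁻¹
        simpa using this
      rw [← SetLike.mem_coe, hS]; exact this
    · intro h
      rw [← SetLike.mem_coe, hS] at h
      intro b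
      have := h b⁻¹
      simpa using this
  -- injective map from A ⧸ S into GL ⧸ N
  let F : (Polynomial Fq ⧸ S) → (GL (Fin 2) (Polynomial Fq) ⧸ N) :=
    Quotient.lift (fun a => QuotientGroup.mk (unipGL a)) (by
      intro a b hab
      have hab' : a - b ∈ S := (Submodule.quotientRel_def S).mp hab
      apply (QuotientGroup.eq).mpr
      rw [unipGL_inv, unipGL_mul]
      exact (hkey _).mpr (by simpa [neg_sub, sub_eq_neg_add] using S.neg_mem hab'))
  have hFinj : Function.Injective F := by
    intro x y
    induction x using Quotient.inductionOn
    induction y using Quotient.inductionOn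
    rename_i a b
    intro h
    have h' := (QuotientGroup.eq).mp h
    rw [unipGL_inv, unipGL_mul] at h'
    have h2 : -a + b ∈ S := (hkey _).mp h'
    apply (Submodule.Quotient.eq S).mpr
    simpa [neg_sub, sub_eq_neg_add] using S.neg_mem h2
  haveI : Finite (Polynomial Fq ⧸ S) := Finite.of_injective F hFinj
  exact Module.Finite.of_finite
end

section
/- Let q be a prime power and A = F_q[T]. Let Γ be a finite-index subgroup of SL₂(A) and suppose there is a nonzero polynomial f ∈ A of degree at most 1 such that the ideal (f) is contained in the quasi-level ql(Γ) (so the level of Γ contains (f)). Then Γ is a congruence subgroup. -/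
open Matrix Polynomial

/-- A subgroup `Γ ≤ SL₂(R)` is a congruence subgroup if it contains the kernel of the
reduction map `SL₂(R) → SL₂(R/I)` for some nonzero ideal `I` of `R`. -/
def IsCongruenceSubgroup {R : Type*} [CommRing R]
    (Γ : Subgroup (Matrix.SpecialLinearGroup (Fin 2) R)) : Prop :=
  ∃ I : Ideal R, I ≠ ⊥ ∧
    MonoidHom.ker (Matrix.SpecialLinearGroup.map (n := Fin 2) (Ideal.Quotient.mk I)) ≤ Γ

/-!
Since `deg f ≤ 1`, the ideal `(f)` contains `X - a` for some `a`, so every unipotent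
`[[1, y], [0, 1]]` with `y(a) = 0` lies in the normal core `N` of `Γ`. Reduction modulo
`X - a` followed by the constant embedding is an endomorphism `φ` of `SL₂(K[X])` whose kernel
contains the principal congruence subgroup of level `X - a`. Over a Euclidean domain `SL₂` is
generated by upper unipotents, diagonal matrices and the Weyl element, and every such generator
`s` has `s / φ s ∈ N`; hence `φ` and the identity agree modulo `N`, so `ker φ ≤ N ≤ Γ`.
-/

open scoped MatrixGroups

theorem MonoidHom.ker_le_of_div_map_mem_of_closure_eq_top {G : Type*} [Group G] {S : Set G}
    (hS : Subgroup.closure S = ⊤) (φ : G →* G) {N : Subgroup G} [N.Normal]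
    (h : ∀ s ∈ S, s / φ s ∈ N) : φ.ker ≤ N := by
  have hφ : (QuotientGroup.mk' N).comp φ = QuotientGroup.mk' N :=
    MonoidHom.eq_of_eqOn_dense hS fun s hs => (QuotientGroup.eq_iff_div_mem.2 (h s hs)).symm
  intro g hg
  rw [← QuotientGroup.eq_one_iff, ← QuotientGroup.mk'_apply, ← hφ, comp_apply, hg, map_one]

namespace Polynomial

section CommRing

variable {R : Type*} [CommRing R]

noncomputable def evalConst (a : R) : R[X] →+* R[X] :=
  C.comp (evalRingHom a)

lemma evalConst_apply (a : R) (p : R[X]) : evalConst a p = C (p.eval a) := rfl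

lemma evalConst_of_isUnit [IsDomain R] (a : R) {p : R[X]} (hp : IsUnit p) :
    evalConst a p = p := by
  obtain ⟨r, -, rfl⟩ := isUnit_iff.1 hp
  rw [evalConst_apply, eval_C]

lemma ker_evalRingHom_le_ker_evalConst (a : R) :
    RingHom.ker (evalRingHom a) ≤ RingHom.ker (evalConst a) := fun p hp => by
  rw [RingHom.mem_ker, coe_evalRingHom] at hp
  rw [RingHom.mem_ker, evalConst_apply, hp, map_zero]

end CommRing

theorem exists_dvd_X_sub_C_of_degree_le_one {K : Type*} [Field K] {f : K[X]} (hf0 : f ≠ 0)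
    (hf : f.degree ≤ 1) : ∃ a, f ∣ X - C a := by
  rcases (natDegree_le_iff_degree_le.2 hf : f.natDegree ≤ 1).lt_or_eq with hdeg | hdeg
  · have hunit : IsUnit f := isUnit_iff_degree_eq_zero.2 <| by
      rw [degree_eq_natDegree hf0, Nat.lt_one_iff.1 hdeg, Nat.cast_zero]
    exact ⟨0, hunit.dvd⟩
  · set g := f * C f.leadingCoeff⁻¹
    have hg : g = X + C (g.coeff 0) := (monic_mul_leadingCoeff_inv hf0).eq_X_add_C <| by
      rw [natDegree_mul_leadingCoeff_inv _ hf0, hdeg]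
    refine ⟨-g.coeff 0, ?_⟩
    rw [map_neg, sub_neg_eq_add, ← hg]
    exact dvd_mul_right f _

end Polynomial

open Matrix.SpecialLinearGroup in
def unipSL {R : Type*} [CommRing R] (b : R) : SL(2, R) :=
  transvection (i := 0) (j := 1) (by decide) b

def weylSL {R : Type*} [CommRing R] : SL(2, R) :=
  ⟨!![0, -1; 1, 0], by simp [Matrix.det_fin_two_of]⟩

namespace Matrix.SpecialLinearGroup

section CommRing

variable {R S : Type*} [CommRing R] [CommRing S]

lemma coe_unipSL (b : R) : (unipSL b : Matrix (Fin 2) (Fin 2) R) = !![1, b; 0, 1] := by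
  ext i j
  fin_cases i <;> fin_cases j <;> simp [unipSL, transvection_coe]

lemma coe_weylSL : ((weylSL : SL(2, R)) : Matrix (Fin 2) (Fin 2) R) = !![0, -1; 1, 0] := rfl

lemma unipSL_zero : (unipSL 0 : SL(2, R)) = 1 :=
  transvection_coeff_zero _

lemma unipSL_add (b c : R) : unipSL (b + c) = unipSL b * unipSL c :=
  transvection_add _ b c

lemma unipSL_div_unipSL (b c : R) : unipSL b / unipSL c = unipSL (b - c) := by
  rw [div_eq_iff_eq_mul, ← unipSL_add, sub_add_cancel]

lemma map_unipSL (ψ : R →+* S) (b : R) : map ψ (unipSL b) = unipSL (ψ b) := by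
  ext i j
  fin_cases i <;> fin_cases j <;> simp [map_apply_coe, coe_unipSL]

lemma map_weylSL (ψ : R →+* S) : map ψ weylSL = weylSL := by
  ext i j
  fin_cases i <;> fin_cases j <;> simp [map_apply_coe, coe_weylSL]

lemma toGL_unipSL (b : R) : toGL (unipSL b) = unipGL b :=
  Units.ext (coe_unipSL b)

lemma apply_zero_zero_mul_apply_one_one_of_apply_one_zero {M : SL(2, R)} (hM : M 1 0 = 0) :
    M 0 0 * M 1 1 = 1 := by
  have h := M.det_coe
  rwa [det_fin_two, hM, mul_zero, sub_zero] at h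

lemma unipSL_mem_normalCore_of_mem_quasiLevelSL {Γ : Subgroup SL(2, R)} {b : R}
    (hb : b ∈ quasiLevelSL Γ) : unipSL b ∈ Γ.normalCore := fun γ => by
  have h := hb (toGL γ)⁻¹
  rwa [inv_inv, ← toGL_unipSL, ← map_inv, ← map_mul, ← map_mul,
    Subgroup.mem_map_iff_mem toGL_injective] at h

lemma ker_map_mk_le_ker_map {n : Type*} [Fintype n] [DecidableEq n] (ψ : R →+* S) {I : Ideal R}
    (hI : I ≤ RingHom.ker ψ) :
    (map (n := n) (Ideal.Quotient.mk I)).ker ≤ (map (n := n) ψ).ker := by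
  have hψ : map (n := n) ψ =
      (map (Ideal.Quotient.lift I ψ hI)).comp (map (Ideal.Quotient.mk I)) := by
    ext M i j
    exact (Ideal.Quotient.lift_mk I ψ hI).symm
  intro M hM
  rw [MonoidHom.mem_ker, hψ, MonoidHom.comp_apply, hM, map_one]

def sl2Generators : Set SL(2, R) :=
  insert weylSL (Set.range unipSL ∪ {M | M 0 1 = 0 ∧ M 1 0 = 0})

end CommRing

section EuclideanDomain

variable {R : Type*} [EuclideanDomain R]

lemma mem_closure_sl2Generators_of_apply_one_zero {M : SL(2, R)} (hM : M 1 0 = 0) :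
    M ∈ Subgroup.closure sl2Generators := by
  have hdet := apply_zero_zero_mul_apply_one_one_of_apply_one_zero hM
  have hdiag : M * unipSL (-(M 1 1 * M 0 1)) ∈ sl2Generators := by
    refine Or.inr (Or.inr ⟨?_, ?_⟩)
    · calc (M * unipSL (-(M 1 1 * M 0 1))) 0 1 = M 0 0 * -(M 1 1 * M 0 1) + M 0 1 := by
            simp [coe_mul, coe_unipSL, Matrix.mul_apply, Fin.sum_univ_two]
        _ = 0 := by linear_combination (-M 0 1) * hdet
    · simp [coe_mul, coe_unipSL, Matrix.mul_apply, Fin.sum_univ_two, hM]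
  have hunip : unipSL (M 1 1 * M 0 1) ∈ sl2Generators := Or.inr (Or.inl ⟨_, rfl⟩)
  have h := mul_mem (Subgroup.subset_closure hdiag) (Subgroup.subset_closure hunip)
  rwa [mul_assoc, ← unipSL_add, neg_add_cancel, unipSL_zero, mul_one] at h

lemma closure_sl2Generators_eq_top : Subgroup.closure (sl2Generators : Set SL(2, R)) = ⊤ := by
  refine eq_top_iff.2 fun M _ => ?_
  refine EuclideanDomain.r_wellFounded.induction
    (C := fun c => ∀ M : SL(2, R), M 1 0 = c → M ∈ Subgroup.closure sl2Generators)
    (M 1 0) ?_ M rfl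
  rintro c ih M rfl
  by_cases hc0 : M 1 0 = 0
  · exact mem_closure_sl2Generators_of_apply_one_zero hc0
  -- One step of the Euclidean algorithm on the first column.
  set M' := weylSL * (unipSL (-(M 0 0 / M 1 0)) * M) with hM'
  have hM'10 : M' 1 0 = M 0 0 % M 1 0 :=
    calc M' 1 0 = M 0 0 + -(M 0 0 / M 1 0 * M 1 0) := by
          simp [hM', coe_mul, coe_unipSL, coe_weylSL, Matrix.mul_apply, vecMul, dotProduct,
            Fin.sum_univ_two]
      _ = M 0 0 % M 1 0 := by rw [EuclideanDomain.mod_eq_sub_mul_div]; ring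
  have hW : weylSL ∈ Subgroup.closure (sl2Generators : Set SL(2, R)) :=
    Subgroup.subset_closure (Set.mem_insert _ _)
  have hU : unipSL (-(M 0 0 / M 1 0)) ∈ Subgroup.closure (sl2Generators : Set SL(2, R)) :=
    Subgroup.subset_closure (Or.inr (Or.inl ⟨_, rfl⟩))
  have hM'mem := ih _ (hM'10 ▸ EuclideanDomain.mod_lt _ hc0) M' rfl
  have hM : M = (unipSL (-(M 0 0 / M 1 0)))⁻¹ * (weylSL⁻¹ * M') := by
    rw [hM']; group
  rw [hM]
  exact mul_mem (inv_mem hU) (mul_mem (inv_mem hW) hM'mem)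

end EuclideanDomain

section Polynomial

open Polynomial

variable {K : Type*} [Field K]

lemma div_map_evalConst_mem_of_mem_sl2Generators {a : K} {N : Subgroup SL(2, K[X])}
    (hN : ∀ y : K[X], y.eval a = 0 → unipSL y ∈ N) {s : SL(2, K[X])}
    (hs : s ∈ sl2Generators) : s / map (evalConst a) s ∈ N := by
  rcases hs with rfl | ⟨y, rfl⟩ | ⟨h01, h10⟩
  · rw [map_weylSL, div_self']
    exact one_mem N
  · rw [map_unipSL, unipSL_div_unipSL]
    exact hN _ (by rw [eval_sub, evalConst_apply, eval_C, sub_self])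
  · have hdet := apply_zero_zero_mul_apply_one_one_of_apply_one_zero h10
    have hfix : map (evalConst a) s = s := by
      refine ext _ _ fun i j => ?_
      fin_cases i <;> fin_cases j <;>
        simp [map_apply_coe, h01, h10, evalConst_of_isUnit a (IsUnit.of_mul_eq_one _ hdet),
          evalConst_of_isUnit a (IsUnit.of_mul_eq_one_right _ hdet)]
    rw [hfix, div_self']
    exact one_mem N

lemma ker_map_evalConst_le {a : K} {N : Subgroup SL(2, K[X])} [N.Normal]
    (hN : ∀ y : K[X], y.eval a = 0 → unipSL y ∈ N) : (map (evalConst a)).ker ≤ N :=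
  MonoidHom.ker_le_of_div_map_mem_of_closure_eq_top closure_sl2Generators_eq_top _
    fun _ => div_map_evalConst_mem_of_mem_sl2Generators hN

end Polynomial

end Matrix.SpecialLinearGroup

open Matrix.SpecialLinearGroup in
theorem congruence_of_level_deg_le_one_general (Fq : Type*) [Field Fq]
    (Γ : Subgroup (Matrix.SpecialLinearGroup (Fin 2) (Polynomial Fq)))
    (f : Polynomial Fq) (hfd : f.degree ≤ 1)
    (hf : (Ideal.span {f} : Ideal (Polynomial Fq)) ≠ ⊥ ∧
      ((Ideal.span {f} : Ideal (Polynomial Fq)) : Set (Polynomial Fq)) ⊆ quasiLevelSL Γ) :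
    IsCongruenceSubgroup Γ := by
  obtain ⟨a, hfa⟩ := exists_dvd_X_sub_C_of_degree_le_one (by simpa using hf.1) hfd
  have hunip : ∀ y : Fq[X], y.eval a = 0 → unipSL y ∈ Γ.normalCore := fun y hy =>
    unipSL_mem_normalCore_of_mem_quasiLevelSL <| hf.2 <|
      Ideal.mem_span_singleton.2 <| hfa.trans <| dvd_iff_isRoot.2 hy
  refine ⟨RingHom.ker (evalRingHom a), by simp [ker_evalRingHom, X_sub_C_ne_zero], ?_⟩
  calc _ ≤ (SpecialLinearGroup.map (evalConst a)).ker :=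
        ker_map_mk_le_ker_map _ (ker_evalRingHom_le_ker_evalConst a)
    _ ≤ Γ.normalCore := ker_map_evalConst_le hunip
    _ ≤ Γ := Γ.normalCore_le

/-- For `A = Fq[T]`: a finite-index subgroup `Γ ≤ SL₂(A)` whose quasi-level
contains a nonzero ideal `(f)` with `deg f ≤ 1` is a congruence subgroup. -/
theorem congruence_of_level_deg_le_one (Fq : Type*) [Field Fq] [Fintype Fq]
    (Γ : Subgroup (Matrix.SpecialLinearGroup (Fin 2) (Polynomial Fq)))
    (hΓ : Γ.FiniteIndex) (f : Polynomial Fq) (hf0 : f ≠ 0) (hfd : f.degree ≤ 1)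
    (hf : (Ideal.span {f} : Ideal (Polynomial Fq)) ≠ ⊥ ∧
      ((Ideal.span {f} : Ideal (Polynomial Fq)) : Set (Polynomial Fq)) ⊆ quasiLevelSL Γ) :
    IsCongruenceSubgroup Γ :=
  congruence_of_level_deg_le_one_general Fq Γ f hfd hf
end

section
/- Let k be a field of characteristic p > 0 and let G be a finite subgroup of the additive group of k. Define φ : k → k by φ(x) = ∏_{g ∈ G} (x − g). Then φ is an additive group homomorphism, and for all a, b ∈ k one has φ(a) = φ(b) if and only if a − b ∈ G; in particular the kernel of φ is exactly G. -/
open Polynomial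

/-- Let `k` be a field of characteristic `p > 0` and `G` a finite subgroup of
the additive group of `k`. The map `φ : k → k`, `φ(x) = ∏_{g ∈ G} (x - g)`, is an additive
group homomorphism; moreover `φ(a) = φ(b)` iff `a - b ∈ G`, and in particular the kernel of
`φ` is exactly `G`. -/
theorem additive_polynomial_of_finite_subgroup
    (p : ℕ) (hp : p.Prime) (k : Type*) [Field k] [CharP k p]
    (G : AddSubgroup k) [Fintype G] :
    (∀ a b : k, (∏ g : G, ((a + b) - (g : k)))
        = (∏ g : G, (a - (g : k))) + (∏ g : G, (b - (g : k)))) ∧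
    (∀ a b : k, (∏ g : G, (a - (g : k))) = (∏ g : G, (b - (g : k))) ↔ a - b ∈ G) ∧
    (∀ a : k, (∏ g : G, (a - (g : k))) = 0 ↔ a ∈ G) := by
  classical
  set P : k[X] := ∏ g : G, (X - C (g : k)) with hP
  have hmonic : P.Monic := monic_prod_of_monic _ _ fun g _ => monic_X_sub_C _
  have hdeg : P.natDegree = Fintype.card G := by
    rw [hP, natDegree_prod_of_monic _ _ fun g _ => monic_X_sub_C _]
    simp
  have heval : ∀ a : k, P.eval a = ∏ g : G, (a - (g : k)) := by
    intro a; rw [hP, eval_prod]; simp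
  -- roots
  have hroot : ∀ a : k, P.eval a = 0 ↔ a ∈ G := by
    intro a
    rw [heval, Finset.prod_eq_zero_iff]
    constructor
    · rintro ⟨g, -, hg⟩
      rw [sub_eq_zero] at hg
      exact hg ▸ g.2
    · intro ha
      exact ⟨⟨a, ha⟩, Finset.mem_univ _, by simp⟩
  -- translation invariance
  have htrans : ∀ (a : k) (g : k), g ∈ G → P.eval (a + g) = P.eval a := by
    intro a g hg
    rw [heval, heval]
    refine Fintype.prod_equiv (Equiv.subRight (⟨g, hg⟩ : G)) _ _ fun x => ?_
    simp only [Equiv.subRight_apply]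
    push_cast
    ring
  have hcardpos : 0 < Fintype.card G := Fintype.card_pos
  -- additivity
  have hadd : ∀ a b : k, P.eval (a + b) = P.eval a + P.eval b := by
    intro a b
    set Q : k[X] := P.comp (X + C b) - P - C (P.eval b) with hQ
    have hcomp : (P.comp (X + C b)).Monic := by
      apply hmonic.comp (monic_X_add_C b)
      simp
    have hcompdeg : (P.comp (X + C b)).natDegree = P.natDegree := by
      rw [natDegree_comp]; simp
    have hdegeq : (P.comp (X + C b)).degree = P.degree := by
      rw [degree_eq_natDegree hcomp.ne_zero, degree_eq_natDegree hmonic.ne_zero, hcompdeg]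
    have hQdeg : Q.natDegree < Fintype.card G := by
      have h1 : (P.comp (X + C b) - P).degree < P.degree := by
        rw [← hdegeq]
        exact degree_sub_lt hdegeq hcomp.ne_zero
          (by rw [hmonic.leadingCoeff, hcomp.leadingCoeff])
      have h2 : Q.degree < P.degree := by
        rw [hQ]
        refine lt_of_le_of_lt (degree_sub_le _ _) (max_lt h1 ?_)
        refine lt_of_le_of_lt degree_C_le ?_
        rw [degree_eq_natDegree hmonic.ne_zero, hdeg]
        exact_mod_cast hcardpos
      rcases eq_or_ne Q 0 with h | h
      · rw [h]; simpa using hcardpos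
      · have := natDegree_lt_natDegree h h2
        omega
    have hQ0 : Q = 0 := by
      apply eq_zero_of_natDegree_lt_card_of_eval_eq_zero Q
        (f := fun g : G => (g : k)) Subtype.val_injective _ hQdeg
      intro g
      simp only [hQ, eval_sub, eval_comp, eval_add, eval_X, eval_C]
      rw [add_comm ((g : k)) b, htrans b g g.2, (hroot (g : k)).mpr g.2]
      ring
    have := congrArg (eval a) hQ0
    simp only [hQ, eval_sub, eval_comp, eval_add, eval_X, eval_C, eval_zero] at this
    linear_combination this
  refine ⟨fun a b => by rw [← heval, ← heval, ← heval, hadd], ?_, fun a => (heval a) ▸ hroot a⟩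
  intro a b
  rw [← heval, ← heval]
  have h := hadd (a - b) b
  rw [sub_add_cancel] at h
  constructor
  · intro hab
    have : P.eval (a - b) = 0 := by rw [h] at hab; linear_combination hab
    exact (hroot _).mp this
  · intro hab
    rw [h, (hroot _).mpr hab, zero_add]
end

section
/- Let k be a field of characteristic p > 0 and let G be a finite subgroup of the additive group of k. Then the formal derivative of the polynomial φ_G(X) = ∏_{g ∈ G} (X − g) ∈ k[X] is the nonzero constant ∏_{g ∈ G, g ≠ 0} (−g); in particular φ_G is a separable polynomial. -/
open Polynomial
open scoped Classical

theorem derivative_finset_prod' {R ι : Type*} [CommSemiring R] [DecidableEq ι]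
    (s : Finset ι) (f : ι → R[X]) :
    derivative (∏ i ∈ s, f i) = ∑ i ∈ s, (∏ j ∈ s.erase i, f j) * derivative (f i) := by
  induction s using Finset.induction_on with
  | empty => simp
  | @insert a s ha ih =>
      rw [Finset.prod_insert ha, derivative_mul, ih, Finset.mul_sum, Finset.sum_insert ha,
        Finset.erase_insert ha]
      congr 1
      · exact mul_comm _ _
      · refine Finset.sum_congr rfl fun i hi => ?_
        rw [Finset.erase_insert_of_ne (by rintro rfl; exact ha hi),
          Finset.prod_insert (by simp [ha, Finset.mem_erase]), mul_assoc]

/-- Let `k` be a field of characteristic `p > 0` and `G` a finite subgroup of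
the additive group of `k`. The formal derivative of `φ_G(X) = ∏_{g ∈ G} (X - g) ∈ k[X]` is the
nonzero constant `∏_{g ∈ G, g ≠ 0} (-g)`; in particular `φ_G` is a separable polynomial. -/
theorem derivative_additive_polynomial_of_finite_subgroup
    (p : ℕ) (hp : p.Prime) (k : Type*) [Field k] [CharP k p]
    (G : AddSubgroup k) [Fintype G] :
    Polynomial.derivative (∏ g : G, (Polynomial.X - Polynomial.C (g : k)))
        = Polynomial.C (∏ g ∈ Finset.univ.filter (fun g : G => (g : k) ≠ 0), (-(g : k))) ∧
    (∏ g ∈ Finset.univ.filter (fun g : G => (g : k) ≠ 0), (-(g : k))) ≠ 0 ∧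
    (∏ g : G, (Polynomial.X - Polynomial.C (g : k))).Separable := by
  set φ : k[X] := ∏ g : G, (X - C (g : k)) with hφ
  set c : k := ∏ g ∈ Finset.univ.filter (fun g : G => (g : k) ≠ 0), (-(g : k)) with hc
  have hc0 : c ≠ 0 := by
    rw [hc]
    refine Finset.prod_ne_zero_iff.mpr fun g hg => ?_
    simp only [Finset.mem_filter] at hg
    simpa using hg.2
  -- evaluate derivative at every element of G
  have heval : ∀ a : G, eval (a : k) (derivative φ) = c := by
    intro a
    rw [hφ, derivative_finset_prod', eval_finset_sum]
    rw [Finset.sum_eq_single a]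
    · simp only [derivative_sub, derivative_X, derivative_C, sub_zero, mul_one, eval_prod,
        eval_sub, eval_X, eval_C]
      rw [hc]
      refine Finset.prod_bij (fun g _ => g - a) ?_ ?_ ?_ ?_
      · intro g hg
        simp only [Finset.mem_erase, Finset.mem_univ, and_true] at hg
        simp only [Finset.mem_filter, Finset.mem_univ, true_and, AddSubgroup.coe_sub]
        exact sub_ne_zero.mpr (by exact_mod_cast hg)
      · intro g₁ _ g₂ _ h
        simpa using sub_left_injective h
      · intro b hb
        simp only [Finset.mem_filter, Finset.mem_univ, true_and] at hb
        refine ⟨b + a, ?_, by simp⟩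
        simp only [Finset.mem_erase, Finset.mem_univ, and_true]
        intro h
        apply hb
        have hb0 : b = 0 := by simpa using congrArg (fun x => x - a) h
        simp [hb0]
      · intro g hg
        push_cast
        ring
    · intro h _ hha
      rw [eval_mul]
      apply mul_eq_zero_of_left
      rw [eval_prod]
      refine Finset.prod_eq_zero (i := a) ?_ ?_
      · simp [Finset.mem_erase, Ne.symm hha]
      · simp
    · simp
  -- derivative is the constant c
  have hcard : φ.natDegree = Fintype.card G := by
    rw [hφ, natDegree_prod _ _ (fun g _ => X_sub_C_ne_zero _)]
    simp [natDegree_X_sub_C, Finset.card_univ]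
  have hcardpos : 0 < Fintype.card G := Fintype.card_pos
  have hderiv : derivative φ = C c := by
    have hz : derivative φ - C c = 0 := by
      refine Polynomial.eq_zero_of_natDegree_lt_card_of_eval_eq_zero _
        (f := fun g : G => (g : k)) (fun a b h => Subtype.ext h) (fun a => by simp [heval a]) ?_
      calc (derivative φ - C c).natDegree ≤ max (derivative φ).natDegree (C c).natDegree :=
            natDegree_sub_le _ _
        _ < Fintype.card G := by
            refine max_lt ?_ (by simpa [natDegree_C] using hcardpos)
            have := natDegree_derivative_lt (p := φ) (by rw [hcard]; omega)
            omega
    have := sub_eq_zero.mp hz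
    exact this
  refine ⟨hderiv, hc0, ?_⟩
  exact ⟨0, C c⁻¹, by rw [hderiv, zero_mul, zero_add, ← C_mul, inv_mul_cancel₀ hc0, C_1]⟩
end
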